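/- The path-error analysis is total on well-typed updates: (1) if Γ ⊢ₐ τ ⟹ s ⟹ τ' then there exists a label set L with Γ ⊢ₐ τ ⟹ s ⟹ τ' / L in the path-error analysis; (2) if Γ ⊢ τ ⟹ iter s ⟹ τ' then there exists L with Γ ⊢ τ ⟹ iter s ⟹ τ' / L. -/

import Mathlib

set_option autoImplicit true
set_option relaxedAutoImplicit true

namespace Flux

/-- XML tree values: labeled nodes, strings, and booleans. -/
inductive Tree where
  | node : String → List Tree → Tree
  | str  : String → Tree
  | bool : Bool → Tree

/-- A forest value is a list of trees. -/
abbrev Forest := List Tree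

/-- Forest comprehension: [f(x) | x ∈ v]. -/
def fcomp (f : Tree → Forest) : Forest → Forest
  | [] => []
  | t :: v => f t ++ fcomp f v

/-- Regular expression types over XML forests (with type variables for the
source type system). -/
inductive Ty where
  | bool   : Ty
  | string : Ty
  | elem   : String → Ty → Ty
  | empty  : Ty
  | alt    : Ty → Ty → Ty
  | seq    : Ty → Ty → Ty
  | star   : Ty → Ty
  | tvar   : Nat → Ty

/-- Membership of a forest value in the denotation of a type. -/
inductive TyMem : Ty → Forest → Prop where
  | bool (b : Bool) : TyMem .bool [.bool b]
  | str (w : String) : TyMem .string [.str w]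
  | elem {n τ v} : TyMem τ v → TyMem (.elem n τ) [.node n v]
  | empty : TyMem .empty []
  | altL {τ₁ τ₂ v} : TyMem τ₁ v → TyMem (.alt τ₁ τ₂) v
  | altR {τ₁ τ₂ v} : TyMem τ₂ v → TyMem (.alt τ₁ τ₂) v
  | seq {τ₁ τ₂ v₁ v₂} : TyMem τ₁ v₁ → TyMem τ₂ v₂ → TyMem (.seq τ₁ τ₂) (v₁ ++ v₂)
  | starNil {τ} : TyMem (.star τ) []
  | starCons {τ v₁ v₂} : TyMem τ v₁ → TyMem (.star τ) v₂ → TyMem (.star τ) (v₁ ++ v₂)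

/-- Denotation of a type as a set of forests. -/
def denot (τ : Ty) : Set Forest := {v | TyMem τ v}

/-- Atomic (singular) types: bool, string, n[τ]. -/
def Ty.isAtomic : Ty → Prop
  | .bool => True
  | .string => True
  | .elem _ _ => True
  | _ => False

/-- Semantic subtyping. -/
def Sub (τ τ' : Ty) : Prop := ∀ v, TyMem τ v → TyMem τ' v

/-- Tests: label test n, node(), text(). -/
inductive Test where
  | lab : String → Test
  | node : Test
  | text : Test

/-- Semantic interpretation of tests on trees. -/
def TestSem : Test → Tree → Prop
  | .lab n, .node n' _ => n = n'
  | .lab _, _ => False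
  | .node, _ => True
  | .text, .str _ => True
  | .text, _ => False

/-- Test-matching rules α <: φ. -/
inductive TMatch : Ty → Test → Prop where
  | text : TMatch .string .text
  | lab {n τ} : TMatch (.elem n τ) (.lab n)
  | node {α} : α.isAtomic → TMatch α .node

/-- A minimal query expression language (a fragment of μXQ). -/
inductive Expr where
  | empty : Expr
  | seqe : Expr → Expr → Expr
  | elem : String → Expr → Expr
  | str : String → Expr
  | var : String → Expr
  | tt : Expr
  | ff : Expr

/-- Environments map variables to forest values. -/
abbrev Env := String → Forest

/-- Big-step query evaluation γ ⊢ e ⇓ v. -/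
inductive QEval : Env → Expr → Forest → Prop where
  | empty : QEval γ .empty []
  | seqe : QEval γ e₁ v₁ → QEval γ e₂ v₂ → QEval γ (.seqe e₁ e₂) (v₁ ++ v₂)
  | elem : QEval γ e v → QEval γ (.elem n e) [.node n v]
  | str : QEval γ (.str w) [.str w]
  | var : QEval γ (.var x) (γ x)
  | tt : QEval γ .tt [.bool true]
  | ff : QEval γ .ff [.bool false]

/-- Typing contexts map variables to types. -/
abbrev Ctx := String → Ty

/-- Query typing Γ ⊢ e : τ (with subsumption). -/
inductive QTy : Ctx → Expr → Ty → Prop where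
  | empty : QTy Γ .empty .empty
  | seqe : QTy Γ e₁ τ₁ → QTy Γ e₂ τ₂ → QTy Γ (.seqe e₁ e₂) (.seq τ₁ τ₂)
  | elem : QTy Γ e τ → QTy Γ (.elem n e) (.elem n τ)
  | str : QTy Γ (.str w) .string
  | var : QTy Γ (.var x) (Γ x)
  | tt : QTy Γ .tt .bool
  | ff : QTy Γ .ff .bool
  | sub : QTy Γ e τ → Sub τ τ' → QTy Γ e τ'

/-- Core Flux update statements. -/
inductive Stmt where
  | skip : Stmt
  | seqc : Stmt → Stmt → Stmt
  | ite : Expr → Stmt → Stmt → Stmt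
  | lett : String → Expr → Stmt → Stmt
  | insert : Expr → Stmt
  | delete : Stmt
  | rename : String → Stmt
  | snapshot : String → Stmt → Stmt
  | test : Test → Stmt → Stmt
  | left : Stmt → Stmt
  | right : Stmt → Stmt
  | children : Stmt → Stmt
  | iter : Stmt → Stmt
  | call : String → List Expr → Stmt

/-- Procedure declarations P(x⃗ : τ⃗) : τ₁ ⇒ τ₂ ≜ s. -/
structure Decl where
  params : List (String × Ty)
  inTy : Ty
  outTy : Ty
  body : Stmt

/-- A set Δ of procedure declarations. -/
abbrev Procs := String → Option Decl

/-- Bind a list of parameters to a list of values in an environment. -/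
def bindArgs : List String → List Forest → Env → Env
  | x :: xs, v :: vs, γ => Function.update (bindArgs xs vs γ) x v
  | _, _, γ => γ

/-- Bind a list of parameters to a list of types in a context. -/
def bindTys : List String → List Ty → Ctx → Ctx
  | x :: xs, τ :: τs, Γ => Function.update (bindTys xs τs Γ) x τ
  | _, _, Γ => Γ

/-- Big-step operational semantics of core Flux updates: γ, v ⊢ s ⇒ v'. -/
inductive Eval (Δ : Procs) : Env → Forest → Stmt → Forest → Prop where
  | skip : Eval Δ γ v .skip v
  | seqc : Eval Δ γ v s₁ v₁ → Eval Δ γ v₁ s₂ v₂ → Eval Δ γ v (.seqc s₁ s₂) v₂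
  | iteT : QEval γ e [.bool true] → Eval Δ γ v s₁ v' → Eval Δ γ v (.ite e s₁ s₂) v'
  | iteF : QEval γ e [.bool false] → Eval Δ γ v s₂ v' → Eval Δ γ v (.ite e s₁ s₂) v'
  | lett : QEval γ e v₀ → Eval Δ (Function.update γ x v₀) v s v' →
      Eval Δ γ v (.lett x e s) v'
  | insert : QEval γ e v → Eval Δ γ [] (.insert e) v
  | delete : Eval Δ γ v .delete []
  | rename : Eval Δ γ [.node n' v] (.rename n) [.node n v]
  | snapshot : Eval Δ (Function.update γ x v) v s v' → Eval Δ γ v (.snapshot x s) v'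
  | testT : TestSem φ t → Eval Δ γ [t] s v → Eval Δ γ [t] (.test φ s) v
  | testF : ¬ TestSem φ t → Eval Δ γ [t] (.test φ s) [t]
  | children : Eval Δ γ v s v' → Eval Δ γ [.node n v] (.children s) [.node n v']
  | left : Eval Δ γ [] s v' → Eval Δ γ v (.left s) (v' ++ v)
  | right : Eval Δ γ [] s v' → Eval Δ γ v (.right s) (v ++ v')
  | iterNil : Eval Δ γ [] (.iter s) []
  | iterCons : Eval Δ γ [t] s v₁ → Eval Δ γ v (.iter s) v₂ →
      Eval Δ γ (t :: v) (.iter s) (v₁ ++ v₂)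
  | call {γ v v' P es vs d} : Δ P = some d → List.Forall₂ (QEval γ) es vs →
      Eval Δ (bindArgs (d.params.map Prod.fst) vs γ) v d.body v' →
      Eval Δ γ v (.call P es) v'

/-- Arity of an update: singular (1) or plural (*). -/
inductive Arity where
  | one : Arity
  | many : Arity

mutual
/-- Update typing Γ ⊢ₐ τ ⟹ s ⟹ τ'. -/
inductive WfUpd (Δ : Procs) : Ctx → Arity → Ty → Stmt → Ty → Prop where
  | skip : WfUpd Δ Γ a τ .skip τ
  | seqc : WfUpd Δ Γ a τ s₁ τ' → WfUpd Δ Γ a τ' s₂ τ'' → WfUpd Δ Γ a τ (.seqc s₁ s₂) τ''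
  | ite : QTy Γ e .bool → WfUpd Δ Γ a τ s₁ τ₁ → WfUpd Δ Γ a τ s₂ τ₂ →
      WfUpd Δ Γ a τ (.ite e s₁ s₂) (.alt τ₁ τ₂)
  | insert : QTy Γ e τ → WfUpd Δ Γ .many .empty (.insert e) τ
  | delete : WfUpd Δ Γ a τ .delete .empty
  | rename : WfUpd Δ Γ .one (.elem n' τ) (.rename n) (.elem n τ)
  | lett : QTy Γ e τ → WfUpd Δ (Function.update Γ x τ) a τ₁ s τ₂ →
      WfUpd Δ Γ a τ₁ (.lett x e s) τ₂
  | snapshot : WfUpd Δ (Function.update Γ x τ) a τ s τ' → WfUpd Δ Γ a τ (.snapshot x s) τ'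
  | testT : Ty.isAtomic α → TMatch α φ → WfUpd Δ Γ .one α s τ →
      WfUpd Δ Γ .one α (.test φ s) τ
  | testF : Ty.isAtomic α → ¬ TMatch α φ → WfUpd Δ Γ .one α (.test φ s) α
  | children : WfUpd Δ Γ .many τ s τ' → WfUpd Δ Γ .one (.elem n τ) (.children s) (.elem n τ')
  | left : WfUpd Δ Γ .many .empty s τ' → WfUpd Δ Γ a τ (.left s) (.seq τ' τ)
  | right : WfUpd Δ Γ .many .empty s τ' → WfUpd Δ Γ a τ (.right s) (.seq τ τ')
  | iter : WfIter Δ Γ τ s τ' → WfUpd Δ Γ .many τ (.iter s) τ'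
  | sub : WfUpd Δ Γ a τ₁ s τ₂' → Sub τ₂' τ₂ → WfUpd Δ Γ a τ₁ s τ₂
  | call {Γ a es d σ₁'} : Δ P = some d → Sub σ₁' d.inTy →
      List.Forall₂ (fun e (p : String × Ty) => ∃ τ', QTy Γ e τ' ∧ Sub τ' p.2) es d.params →
      WfUpd Δ Γ a σ₁' (.call P es) d.outTy

/-- Iteration typing Γ ⊢ τ ⟹ iter s ⟹ τ'. -/
inductive WfIter (Δ : Procs) : Ctx → Ty → Stmt → Ty → Prop where
  | empty : WfIter Δ Γ .empty s .empty
  | atomic : Ty.isAtomic α → WfUpd Δ Γ .one α s τ → WfIter Δ Γ α s τ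
  | star : WfIter Δ Γ τ₁ s τ₂ → WfIter Δ Γ (.star τ₁) s (.star τ₂)
  | seq : WfIter Δ Γ τ₁ s τ₁' → WfIter Δ Γ τ₂ s τ₂' →
      WfIter Δ Γ (.seq τ₁ τ₂) s (.seq τ₁' τ₂')
  | alt : WfIter Δ Γ τ₁ s τ₁' → WfIter Δ Γ τ₂ s τ₂' →
      WfIter Δ Γ (.alt τ₁ τ₂) s (.alt τ₁' τ₂')
end

/-- Well-formedness of all procedure declarations ⊢ Δ. -/
def WfDecls (Δ : Procs) : Prop :=
  ∀ P d, Δ P = some d →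
    WfUpd Δ (bindTys (d.params.map Prod.fst) (d.params.map Prod.snd) (fun _ => Ty.empty))
      .many d.inTy d.body d.outTy

/-- γ ∈ ⟦Γ⟧: every variable has a value of its declared type. -/
def EnvMem (Γ : Ctx) (γ : Env) : Prop := ∀ x, TyMem (Γ x) (γ x)

/-- Conditional union L[l₁,…,lₙ ⇒ l]: add l to L exactly when all lᵢ ∈ L. -/
def condUnion (L : Set ℕ) (ls : List ℕ) (l : ℕ) : Set ℕ :=
  L ∪ {x | x = l ∧ ∀ l' ∈ ls, l' ∈ L}

/-- Distinctly labeled core Flux statements (each node carries a label). -/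
inductive LStmt where
  | skip : Nat → LStmt
  | seqc : Nat → LStmt → LStmt → LStmt
  | ite : Nat → Expr → LStmt → LStmt → LStmt
  | lett : Nat → String → Expr → LStmt → LStmt
  | insert : Nat → Expr → LStmt
  | delete : Nat → LStmt
  | rename : Nat → String → LStmt
  | snapshot : Nat → String → LStmt → LStmt
  | test : Nat → Test → LStmt → LStmt
  | left : Nat → LStmt → LStmt
  | right : Nat → LStmt → LStmt
  | children : Nat → LStmt → LStmt
  | iter : Nat → LStmt → LStmt
  | call : Nat → String → List Expr → LStmt

/-- The top-level label of a labeled statement. -/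
def LStmt.label : LStmt → Nat
  | .skip l => l
  | .seqc l _ _ => l
  | .ite l _ _ _ => l
  | .lett l _ _ _ => l
  | .insert l _ => l
  | .delete l => l
  | .rename l _ => l
  | .snapshot l _ _ => l
  | .test l _ _ => l
  | .left l _ => l
  | .right l _ => l
  | .children l _ => l
  | .iter l _ => l
  | .call l _ _ => l

/-- Erase labels, producing an ordinary core Flux statement. -/
def LStmt.erase : LStmt → Stmt
  | .skip _ => .skip
  | .seqc _ s₁ s₂ => .seqc s₁.erase s₂.erase
  | .ite _ e s₁ s₂ => .ite e s₁.erase s₂.erase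
  | .lett _ x e s => .lett x e s.erase
  | .insert _ e => .insert e
  | .delete _ => .delete
  | .rename _ n => .rename n
  | .snapshot _ x s => .snapshot x s.erase
  | .test _ φ s => .test φ s.erase
  | .left _ s => .left s.erase
  | .right _ s => .right s.erase
  | .children _ s => .children s.erase
  | .iter _ s => .iter s.erase
  | .call _ P es => .call P es

/-- s|_l: replace the subexpression labeled l by skip. -/
def LStmt.prune (l : Nat) (s : LStmt) : LStmt :=
  if s.label = l then .skip l
  else match s with
    | .seqc l' s₁ s₂ => .seqc l' (s₁.prune l) (s₂.prune l)
    | .ite l' e s₁ s₂ => .ite l' e (s₁.prune l) (s₂.prune l)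
    | .lett l' x e s₁ => .lett l' x e (s₁.prune l)
    | .snapshot l' x s₁ => .snapshot l' x (s₁.prune l)
    | .test l' φ s₁ => .test l' φ (s₁.prune l)
    | .left l' s₁ => .left l' (s₁.prune l)
    | .right l' s₁ => .right l' (s₁.prune l)
    | .children l' s₁ => .children l' (s₁.prune l)
    | .iter l' s₁ => .iter l' (s₁.prune l)
    | s => s

mutual
/-- Path-error analysis Γ ⊢ₐ τ ⟹ s ⟹ τ' / L. -/
inductive PEA (Δ : Procs) : Ctx → Arity → Ty → LStmt → Ty → Set ℕ → Prop where
  | skip : PEA Δ Γ a τ (.skip l) τ {l}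
  | seqc : PEA Δ Γ a τ s₁ τ' L₁ → PEA Δ Γ a τ' s₂ τ'' L₂ →
      PEA Δ Γ a τ (.seqc l s₁ s₂) τ'' (condUnion (L₁ ∪ L₂) [s₁.label, s₂.label] l)
  | ite : QTy Γ e .bool → PEA Δ Γ a τ s₁ τ₁ L₁ → PEA Δ Γ a τ s₂ τ₂ L₂ →
      PEA Δ Γ a τ (.ite l e s₁ s₂) (.alt τ₁ τ₂) (condUnion (L₁ ∪ L₂) [s₁.label, s₂.label] l)
  | lett : QTy Γ e τ₀ → PEA Δ (Function.update Γ x τ₀) a τ₁ s τ₂ L →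
      PEA Δ Γ a τ₁ (.lett l x e s) τ₂ (condUnion L [s.label] l)
  | snapshot : PEA Δ (Function.update Γ x τ) a τ s τ' L →
      PEA Δ Γ a τ (.snapshot l x s) τ' (condUnion L [s.label] l)
  | insert : QTy Γ e τ → PEA Δ Γ .many .empty (.insert l e) τ {x | x = l ∧ Sub τ .empty}
  | delete : PEA Δ Γ a τ (.delete l) .empty {x | x = l ∧ Sub τ .empty}
  | rename : PEA Δ Γ .one (.elem n' τ) (.rename l n) (.elem n τ) {x | x = l ∧ n = n'}
  | testT : Ty.isAtomic α → TMatch α φ → PEA Δ Γ .one α s τ L →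
      PEA Δ Γ .one α (.test l φ s) τ (condUnion L [s.label] l)
  | testF : Ty.isAtomic α → ¬ TMatch α φ → PEA Δ Γ .one α (.test l φ s) α {l}
  | children : PEA Δ Γ .many τ s τ' L →
      PEA Δ Γ .one (.elem n τ) (.children l s) (.elem n τ') (condUnion L [s.label] l)
  | left : PEA Δ Γ .many .empty s τ' L →
      PEA Δ Γ a τ (.left l s) (.seq τ' τ) (condUnion L [s.label] l)
  | right : PEA Δ Γ .many .empty s τ' L →
      PEA Δ Γ a τ (.right l s) (.seq τ τ') (condUnion L [s.label] l)
  | iter : PEAIter Δ Γ τ s τ' L → PEA Δ Γ .many τ (.iter l s) τ' (condUnion L [s.label] l)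
  | call : WfUpd Δ Γ a τ (LStmt.erase (.call l P es)) τ' →
      PEA Δ Γ a τ (.call l P es) τ' ∅
  | sub : PEA Δ Γ a τ₁ s τ₂' L → Sub τ₂' τ₂ → PEA Δ Γ a τ₁ s τ₂ L

/-- Path-error analysis for iteration Γ ⊢ τ ⟹ iter s ⟹ τ' / L. -/
inductive PEAIter (Δ : Procs) : Ctx → Ty → LStmt → Ty → Set ℕ → Prop where
  | empty : PEAIter Δ Γ .empty s .empty {s.label}
  | atomic : Ty.isAtomic α → PEA Δ Γ .one α s τ L → PEAIter Δ Γ α s τ L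
  | star : PEAIter Δ Γ τ₁ s τ₂ L → PEAIter Δ Γ (.star τ₁) s (.star τ₂) L
  | seq : PEAIter Δ Γ τ₁ s τ₁' L₁ → PEAIter Δ Γ τ₂ s τ₂' L₂ →
      PEAIter Δ Γ (.seq τ₁ τ₂) s (.seq τ₁' τ₂') (L₁ ∩ L₂)
  | alt : PEAIter Δ Γ τ₁ s τ₁' L₁ → PEAIter Δ Γ τ₂ s τ₂' L₂ →
      PEAIter Δ Γ (.alt τ₁ τ₂) s (.alt τ₁' τ₂') (L₁ ∩ L₂)
end

/-! Every typing rule has an analysis rule with the same premises, so the analysis is built by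
mutual induction on the typing derivations of updates and of iterations. Typing speaks about the
erased statement `st`, so the induction is over derivations for `st` and ranges over all
labelings `s` with `s.erase = st`. -/

mutual

theorem WfUpd.exists_pea {Δ : Procs} {Γ : Ctx} {a : Arity} {τ : Ty} {st : Stmt} {τ' : Ty} :
    WfUpd Δ Γ a τ st τ' → ∀ s : LStmt, s.erase = st → ∃ L : Set ℕ, PEA Δ Γ a τ s τ' L
  | .skip, s, hs => by
    cases s <;> cases hs
    exact ⟨_, .skip⟩
  | .seqc h₁ h₂, s, hs => by
    -- recursive calls come before `cases`, which would hide `h₁` from structural recursion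
    have ih₁ := h₁.exists_pea
    have ih₂ := h₂.exists_pea
    cases s <;> cases hs
    obtain ⟨_, p₁⟩ := ih₁ _ rfl
    obtain ⟨_, p₂⟩ := ih₂ _ rfl
    exact ⟨_, .seqc p₁ p₂⟩
  | .ite he h₁ h₂, s, hs => by
    have ih₁ := h₁.exists_pea
    have ih₂ := h₂.exists_pea
    cases s <;> cases hs
    obtain ⟨_, p₁⟩ := ih₁ _ rfl
    obtain ⟨_, p₂⟩ := ih₂ _ rfl
    exact ⟨_, .ite he p₁ p₂⟩
  | .insert he, s, hs => by
    cases s <;> cases hs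
    exact ⟨_, .insert he⟩
  | .delete, s, hs => by
    cases s <;> cases hs
    exact ⟨_, .delete⟩
  | .rename, s, hs => by
    cases s <;> cases hs
    exact ⟨_, .rename⟩
  | .lett he h₁, s, hs => by
    have ih₁ := h₁.exists_pea
    cases s <;> cases hs
    obtain ⟨_, p₁⟩ := ih₁ _ rfl
    exact ⟨_, .lett he p₁⟩
  | .snapshot h₁, s, hs => by
    have ih₁ := h₁.exists_pea
    cases s <;> cases hs
    obtain ⟨_, p₁⟩ := ih₁ _ rfl
    exact ⟨_, .snapshot p₁⟩
  | .testT hα hm h₁, s, hs => by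
    have ih₁ := h₁.exists_pea
    cases s <;> cases hs
    obtain ⟨_, p₁⟩ := ih₁ _ rfl
    exact ⟨_, .testT hα hm p₁⟩
  | .testF hα hm, s, hs => by
    cases s <;> cases hs
    exact ⟨_, .testF hα hm⟩
  | .children h₁, s, hs => by
    have ih₁ := h₁.exists_pea
    cases s <;> cases hs
    obtain ⟨_, p₁⟩ := ih₁ _ rfl
    exact ⟨_, .children p₁⟩
  | .left h₁, s, hs => by
    have ih₁ := h₁.exists_pea
    cases s <;> cases hs
    obtain ⟨_, p₁⟩ := ih₁ _ rfl
    exact ⟨_, .left p₁⟩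
  | .right h₁, s, hs => by
    have ih₁ := h₁.exists_pea
    cases s <;> cases hs
    obtain ⟨_, p₁⟩ := ih₁ _ rfl
    exact ⟨_, .right p₁⟩
  | .iter h₁, s, hs => by
    have ih₁ := h₁.exists_peaIter
    cases s <;> cases hs
    obtain ⟨_, p₁⟩ := ih₁ _ rfl
    exact ⟨_, .iter p₁⟩
  | .sub h₁ hsub, s, hs =>
    have ⟨_, p₁⟩ := h₁.exists_pea s hs
    ⟨_, .sub p₁ hsub⟩
  | .call hP hin hargs, s, hs => by
    cases s <;> cases hs
    exact ⟨_, .call (.call hP hin hargs)⟩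

theorem WfIter.exists_peaIter {Δ : Procs} {Γ : Ctx} {τ : Ty} {st : Stmt} {τ' : Ty} :
    WfIter Δ Γ τ st τ' → ∀ s : LStmt, s.erase = st → ∃ L : Set ℕ, PEAIter Δ Γ τ s τ' L
  | .empty, _, _ => ⟨_, .empty⟩
  | .atomic hα h₁, s, hs =>
    have ⟨_, p₁⟩ := h₁.exists_pea s hs
    ⟨_, .atomic hα p₁⟩
  | .star h₁, s, hs =>
    have ⟨_, p₁⟩ := h₁.exists_peaIter s hs
    ⟨_, .star p₁⟩
  | .seq h₁ h₂, s, hs =>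
    have ⟨_, p₁⟩ := h₁.exists_peaIter s hs
    have ⟨_, p₂⟩ := h₂.exists_peaIter s hs
    ⟨_, .seq p₁ p₂⟩
  | .alt h₁ h₂, s, hs =>
    have ⟨_, p₁⟩ := h₁.exists_peaIter s hs
    have ⟨_, p₂⟩ := h₂.exists_peaIter s hs
    ⟨_, .alt p₁ p₂⟩

end

/-- The path-error analysis is total on well-typed updates. -/
theorem pea_total (Δ : Procs) (Γ : Ctx) :
    (∀ (a : Arity) (τ : Ty) (s : LStmt) (τ' : Ty),
      WfUpd Δ Γ a τ s.erase τ' → ∃ L : Set ℕ, PEA Δ Γ a τ s τ' L) ∧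
    (∀ (τ : Ty) (s : LStmt) (τ' : Ty),
      WfIter Δ Γ τ s.erase τ' → ∃ L : Set ℕ, PEAIter Δ Γ τ s τ' L) :=
  ⟨fun _ _ s _ h => h.exists_pea s rfl, fun _ s _ h => h.exists_peaIter s rfl⟩

end Flux
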